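/- arXiv:2502.05618 — 2 statements merged into one kernel-verified Lean document; each statement's English description precedes it below -/
import Mathlib

section
/- Let λ, μ ∈ P̃ℓk and z ∈ [b_λ − 1], and let i ∈ [ℓ − z − 1] be such that z + i ∈ [b_λ]. Suppose (a) λ_z = λ_{z+1} = ⋯ = λ_{z+i} ≥ λ_{z+i+1}; (b) μ_{z+i−1} + 1 = μ_{z+i} ≥ μ_{z+i+1}; (c) μ_{z+i−1} + 1 = λ_{z+i−1}. Then down_{Δ^k(λ)}(z) and down_{Δ^k(μ)}(z+i) are both defined and down_{Δ^k(λ)}(z) + i = down_{Δ^k(μ)}(z+i). -/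
/-!
Common framework: root ideals, Katalan functions, (generalized) K-k-Schur functions,
lowering operators, bounce paths, the sets `Ω`, and (k+1)-cores.
Vectors `γ ∈ ℤ^ℓ` are modelled as functions `ℕ → ℤ`, with the relevant indices `1,…,ℓ`.
Symmetric-function identities are stated in `MvPolynomial (Fin N) ℚ` for every `N`.
-/

noncomputable section KkSchur

/-- Complete homogeneous symmetric polynomial of degree `d` in `N` variables over `ℚ`. -/
def hsym (N d : ℕ) : MvPolynomial (Fin N) ℚ :=
  ∑ m : Sym (Fin N) d, (m.1.map MvPolynomial.X).prod

/-- The inhomogeneous version `k_m^{(r)} = Σ_{i=0}^m C(r+i-1,i) h_{m-i}` (zero for `m < 0`). -/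
def kpoly (N : ℕ) (r : ℕ) (m : ℤ) : MvPolynomial (Fin N) ℚ :=
  if m < 0 then 0
  else ∑ i ∈ Finset.range (m.toNat + 1), ((r + i - 1).choose i : ℚ) • hsym N (m.toNat - i)

/-- `k_γ = k_{γ₁}^{(0)} ⋯ k_{γ_ℓ}^{(ℓ-1)}`. -/
def kgamma (N ℓ : ℕ) (γ : ℕ → ℤ) : MvPolynomial (Fin N) ℚ :=
  ∏ i ∈ Finset.Icc 1 ℓ, kpoly N (i - 1) (γ i)

/-- `Δ⁺_ℓ = {(i,j) : 1 ≤ i < j ≤ ℓ}`. -/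
def DeltaPlus (ℓ : ℕ) : Finset (ℕ × ℕ) :=
  (Finset.Icc 1 ℓ ×ˢ Finset.Icc 1 ℓ).filter fun p => p.1 < p.2

/-- Root ideal: an upper order ideal of `Δ⁺_ℓ` for `(a,b) ≤ (c,d) ↔ a ≥ c ∧ b ≤ d`. -/
def IsRootIdeal (ℓ : ℕ) (Ψ : Finset (ℕ × ℕ)) : Prop :=
  Ψ ⊆ DeltaPlus ℓ ∧ ∀ p ∈ Ψ, ∀ q ∈ DeltaPlus ℓ, q.1 ≤ p.1 → p.2 ≤ q.2 → q ∈ Ψ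

/-- Indicator (as an integer vector) of the interval `[a,b]`. -/
def epsI (a b : ℕ) : ℕ → ℤ := fun t => if a ≤ t ∧ t ≤ b then 1 else 0

/-- Effect of the lowering operators `∏_{z ∈ T} L_z` on the index vector `γ`. -/
def shiftL (T : Multiset ℕ) (γ : ℕ → ℤ) : ℕ → ℤ := fun t => γ t - T.count t

/-- Effect of the raising operators `∏_{(i,j) ∈ A} R_{ij}` on the index vector `γ`. -/
def shiftR (A : Finset (ℕ × ℕ)) (γ : ℕ → ℤ) : ℕ → ℤ := fun t =>
  γ t + ((A.filter fun p => p.1 = t).card : ℤ) - ((A.filter fun p => p.2 = t).card : ℤ)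

/-- The Katalan function `K(Ψ; M; γ) = ∏_{z∈M}(1-L_z) ∏_{(i,j)∈Δ⁺∖Ψ}(1-R_{ij}) k_γ`,
expanded as a signed sum over sub-multisets of `M` and subsets of `Δ⁺_ℓ ∖ Ψ`. -/
def Katalan (N ℓ : ℕ) (Ψ : Finset (ℕ × ℕ)) (M : Multiset ℕ) (γ : ℕ → ℤ) :
    MvPolynomial (Fin N) ℚ :=
  (M.powerset.map fun T =>
    ((-1 : ℚ) ^ Multiset.card T) •
      ∑ A ∈ (DeltaPlus ℓ \ Ψ).powerset,
        ((-1 : ℚ) ^ A.card) • kgamma N ℓ (shiftR A (shiftL T γ))).sum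

/-- The root ideal `Δ^k(μ) = {(i,j) ∈ Δ⁺_ℓ : k - μ_i + i < j}`. -/
def DeltaK (k ℓ : ℕ) (μ : ℕ → ℤ) : Finset (ℕ × ℕ) :=
  (DeltaPlus ℓ).filter fun p => (k : ℤ) - μ p.1 + p.1 < p.2

/-- `L(R)`: the multiset of second components of `R`. -/
def Lmul (R : Finset (ℕ × ℕ)) : Multiset ℕ := R.val.map Prod.snd

/-- The bottom `b_μ` of the root ideal `Δ^k(μ)` (0 if the root ideal is empty). -/
def bottomB (k ℓ : ℕ) (μ : ℕ → ℤ) : ℕ := (DeltaK k ℓ μ).sup Prod.fst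

/-- `(x,j)` is a removable root of `Ψ`. -/
def IsRemovableAt (ℓ : ℕ) (Ψ : Finset (ℕ × ℕ)) (x j : ℕ) : Prop :=
  (x, j) ∈ Ψ ∧ IsRootIdeal ℓ (Ψ.erase (x, j))

open scoped Classical in
/-- `down_Ψ(x)`: the column of the removable root in row `x` (0 if undefined). -/
def downF (ℓ : ℕ) (Ψ : Finset (ℕ × ℕ)) (x : ℕ) : ℕ :=
  ((Finset.Icc 1 ℓ).filter fun j => IsRemovableAt ℓ Ψ x j).sup id

open scoped Classical in
/-- `up_Ψ(x)`: the row of the removable root in column `x` (0 if undefined). -/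
def upF (ℓ : ℕ) (Ψ : Finset (ℕ × ℕ)) (x : ℕ) : ℕ :=
  ((Finset.Icc 1 ℓ).filter fun j => IsRemovableAt ℓ Ψ j x).sup id

/-- `top_Ψ(x)`: the minimum vertex of the bounce path of `Ψ` containing `x`. -/
def topF (ℓ : ℕ) (Ψ : Finset (ℕ × ℕ)) (x : ℕ) : ℕ :=
  if h : 0 < upF ℓ Ψ x ∧ upF ℓ Ψ x < x then topF ℓ Ψ (upF ℓ Ψ x) else x
termination_by x
decreasing_by exact h.2

/-- Membership in `P̃ℓk`. -/
def memPt (k ℓ : ℕ) (μ : ℕ → ℤ) : Prop :=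
  (∀ i ∈ Finset.Icc 1 ℓ, μ i ≤ k) ∧ ∀ i ∈ Finset.Icc 1 (ℓ - 1), μ (i + 1) ≤ μ i + 1

/-- Membership in `Pℓk` (`k`-bounded partitions of length `ℓ`). -/
def memPk (k ℓ : ℕ) (μ : ℕ → ℤ) : Prop :=
  (∀ i ∈ Finset.Icc 1 ℓ, 0 ≤ μ i ∧ μ i ≤ k) ∧ ∀ i ∈ Finset.Icc 1 (ℓ - 1), μ (i + 1) ≤ μ i

/-- The (generalized) K-k-Schur function `g_μ^{(k)} = K(Δ^k(μ); L(Δ^{k+1}(μ)); μ)`. -/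
def gk (N k ℓ : ℕ) (μ : ℕ → ℤ) : MvPolynomial (Fin N) ℚ :=
  Katalan N ℓ (DeltaK k ℓ μ) (Lmul (DeltaK (k + 1) ℓ μ)) μ

/-- `L_w g_μ^{(k)} = K(Δ^k(μ); L(Δ^{k+1}(μ)); μ - ε_w)`, with `L_w = 0` for `w > ℓ`. -/
def Lg (N k ℓ : ℕ) (w : ℕ) (μ : ℕ → ℤ) : MvPolynomial (Fin N) ℚ :=
  if w ≤ ℓ then
    Katalan N ℓ (DeltaK k ℓ μ) (Lmul (DeltaK (k + 1) ℓ μ))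
      (fun t => μ t - if t = w then 1 else 0)
  else 0

open scoped Classical in
/-- `(∏_{w ∈ S} L_w) g_μ^{(k)}`, with the convention `L_w = 0` for `w > ℓ`. -/
def LgM (N k ℓ : ℕ) (S : Multiset ℕ) (μ : ℕ → ℤ) : MvPolynomial (Fin N) ℚ :=
  if ∀ w ∈ S, w ≤ ℓ then
    Katalan N ℓ (DeltaK k ℓ μ) (Lmul (DeltaK (k + 1) ℓ μ)) (fun t => μ t - S.count t)
  else 0

/-- The chain conditions (10) defining `h_{μ,z}` (Definition 3.4). -/
def hcond (k ℓ : ℕ) (μ : ℕ → ℤ) (z h : ℕ) : Prop :=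
  (∀ t, 1 ≤ t → t ≤ h → μ (z + t) = μ z + 1) ∧
  (∀ c, 1 ≤ c → (upF ℓ (DeltaK k ℓ μ))^[c] z ≠ 0 →
    ∀ t ≤ h, μ ((upF ℓ (DeltaK k ℓ μ))^[c] (z + t)) = μ ((upF ℓ (DeltaK k ℓ μ))^[c] z)) ∧
  (∀ t, 1 ≤ t → t ≤ h →
    μ (upF ℓ (DeltaK k ℓ μ) (topF ℓ (DeltaK k ℓ μ) z + t)) =
      μ (upF ℓ (DeltaK k ℓ μ) (topF ℓ (DeltaK k ℓ μ) z + 1)))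

open scoped Classical in
/-- `h_{μ,z}` of Definition 3.4. -/
def hval (k ℓ : ℕ) (μ : ℕ → ℤ) (z : ℕ) : ℕ :=
  if z = ℓ ∨ μ (z + 1) ≤ μ z then 0
  else ((Finset.Icc 1 (ℓ - z)).filter fun h => hcond k ℓ μ z h).sup id

/-- `cover_{z,i}(μ) = μ + ε_{[up(y+1), up(y+i)]} - ε_{[z+1,z+i]}` where `y = top_{Δ^k(μ)}(z)`. -/
def coverzi (k ℓ : ℕ) (μ : ℕ → ℤ) (z i : ℕ) : ℕ → ℤ :=
  if i = 0 then μ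
  else fun t =>
    μ t +
      epsI (upF ℓ (DeltaK k ℓ μ) (topF ℓ (DeltaK k ℓ μ) z + 1))
        (upF ℓ (DeltaK k ℓ μ) (topF ℓ (DeltaK k ℓ μ) z + i)) t -
      epsI (z + 1) (z + i) t

/-- `cover_z(μ) = cover_{z,h_{μ,z}}(μ)`. -/
def coverz (k ℓ : ℕ) (μ : ℕ → ℤ) (z : ℕ) : ℕ → ℤ := coverzi k ℓ μ z (hval k ℓ μ z)

open scoped Classical in
/-- `h′`: the largest `h ∈ [0, ℓ-z]` with `μ_z + 1 = μ_{z+1} = ⋯ = μ_{z+h}`. -/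
def hprime (ℓ : ℕ) (μ : ℕ → ℤ) (z : ℕ) : ℕ :=
  ((Finset.Icc 0 (ℓ - z)).filter fun h => ∀ t, 1 ≤ t → t ≤ h → μ (z + t) = μ z + 1).sup id

/-- `μ_j = μ + σ - ε_{[z+1, z_j]}`, the partial vector in the recursive choice of quadruples. -/
def stepMu (μ σ : ℕ → ℤ) (z zj : ℕ) : ℕ → ℤ := fun t => μ t + σ t - epsI (z + 1) zj t

/-- Valid sequences of quadruples `(z_j, Ψ_j, y_j, i_j)` in the definition of `Ω_{λ,z,d}`:
`ValidSeq k ℓ μ z d σ lo` means `σ` is the accumulated sum of the interval vectors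
`ε_{[up_{Ψ_j}(y_j+1), up_{Ψ_j}(y_j+i_j)]}` and `lo` is the lower bound `z_j + i_j + 1`
for the next choice. -/
inductive ValidSeq (k ℓ : ℕ) (μ : ℕ → ℤ) (z d : ℕ) : (ℕ → ℤ) → ℕ → Prop where
  | nil : ValidSeq k ℓ μ z d (fun _ => 0) z
  | cons (σ : ℕ → ℤ) (lo zj ij : ℕ) :
      ValidSeq k ℓ μ z d σ lo →
      lo ≤ zj → zj + 1 ≤ z + d →
      memPt k ℓ (stepMu μ σ z zj) →
      topF ℓ (DeltaK k ℓ (stepMu μ σ z zj)) (zj + 1) <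
        topF ℓ (DeltaK k ℓ (stepMu μ σ z zj)) zj →
      1 ≤ ij → ij ≤ hval k ℓ (stepMu μ σ z zj) zj → ij ≤ d - zj →
      upF ℓ (DeltaK k ℓ (stepMu μ σ z zj))
          (topF ℓ (DeltaK k ℓ (stepMu μ σ z zj)) zj + ij) < topF ℓ (DeltaK k ℓ μ) z →
      ValidSeq k ℓ μ z d
        (fun t => σ t +
          epsI (upF ℓ (DeltaK k ℓ (stepMu μ σ z zj))
                  (topF ℓ (DeltaK k ℓ (stepMu μ σ z zj)) zj + 1))
               (upF ℓ (DeltaK k ℓ (stepMu μ σ z zj))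
                  (topF ℓ (DeltaK k ℓ (stepMu μ σ z zj)) zj + ij)) t)
        (zj + ij + 1)

/-- Membership in `Ω_{λ,z,d}`. -/
def OmegaMem (k ℓ : ℕ) (lam : ℕ → ℤ) (z d : ℕ) (ν : ℕ → ℤ) : Prop :=
  ∃ σ lo, ValidSeq k ℓ (fun t => lam t - if t = z then 1 else 0) z d σ lo ∧
    memPt k ℓ ν ∧
    ν = fun t => (lam t - if t = z then 1 else 0) + σ t - epsI (z + 1) (z + d) t

/-- Membership in `Ω_{λ,z} = Ω_{λ,z,h′}`. -/
def OmegaZ (k ℓ : ℕ) (lam : ℕ → ℤ) (z : ℕ) (ν : ℕ → ℤ) : Prop :=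
  OmegaMem k ℓ lam z (hprime ℓ (fun t => lam t - if t = z then 1 else 0) z) ν

/-- Membership in `Ω_{λ,{z}ⁿ}` (iterated `Ω_{·,z}`). -/
def OmegaPow (k ℓ z : ℕ) : ℕ → (ℕ → ℤ) → (ℕ → ℤ) → Prop
  | 0, lam, ν => ν = lam
  | n + 1, lam, ν => ∃ ν', OmegaZ k ℓ lam z ν' ∧ OmegaPow k ℓ z n ν' ν

/-- `D_{Δ^k(λ)} = {down_{Δ^k(λ)}(z) : z ∈ [b_λ]}`. -/
def Dset (k ℓ : ℕ) (lam : ℕ → ℤ) : Finset ℕ :=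
  (Finset.Icc 1 (bottomB k ℓ lam)).image fun z => downF ℓ (DeltaK k ℓ lam) z

/-- `[ℓ]_λ = [ℓ] ∖ D_{Δ^k(λ)}`. -/
def ellSet (k ℓ : ℕ) (lam : ℕ → ℤ) : Finset ℕ := Finset.Icc 1 ℓ \ Dset k ℓ lam

/-- Partitions as weakly decreasing, eventually zero functions on `{1,2,…}`. -/
def IsPartF (κ : ℕ → ℕ) : Prop :=
  (∀ i, 1 ≤ i → κ (i + 1) ≤ κ i) ∧ ∃ n, ∀ i, n < i → κ i = 0

/-- Hook length of the cell `(i,j)` of the partition `κ`. -/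
def hookLen (κ : ℕ → ℕ) (i j : ℕ) : ℕ :=
  (κ i + 1 - j) + Set.ncard {r : ℕ | i < r ∧ j ≤ κ r}

/-- `κ` is a `c`-core. -/
def IsCore (c : ℕ) (κ : ℕ → ℕ) : Prop :=
  IsPartF κ ∧ ∀ i j, 1 ≤ i → 1 ≤ j → j ≤ κ i → hookLen κ i j ≠ c

/-- The bijection `𝔭` from `(k+1)`-cores to `k`-bounded partitions:
`𝔭(κ)_i` counts the cells of row `i` of `κ` with hook length at most `k`. -/
def pCore (k : ℕ) (κ : ℕ → ℕ) (i : ℕ) : ℕ :=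
  Set.ncard {j : ℕ | 1 ≤ j ∧ j ≤ κ i ∧ hookLen κ i j ≤ k}

/-- `κ` is the `(k+1)`-core `𝔠(μ)` of the `k`-bounded partition `μ` of length `≤ ℓ`. -/
def IsCoreOf (k ℓ : ℕ) (κ : ℕ → ℕ) (μ : ℕ → ℤ) : Prop :=
  IsCore (k + 1) κ ∧ ∀ i, 1 ≤ i → (pCore k κ i : ℤ) = if i ≤ ℓ then μ i else 0

/-- `𝔠(μ) ⊆ 𝔠(λ)`, i.e. `w_μ ≤ w_λ` in Bruhat order. -/
def coreLE (k ℓ : ℕ) (μ lam : ℕ → ℤ) : Prop :=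
  ∃ κ1 κ2, IsCoreOf k ℓ κ1 μ ∧ IsCoreOf k ℓ κ2 lam ∧ ∀ i, κ1 i ≤ κ2 i

/-- `𝔠(μ) ⊊ 𝔠(λ)`, i.e. `w_μ < w_λ` in Bruhat order. -/
def coreLT (k ℓ : ℕ) (μ lam : ℕ → ℤ) : Prop :=
  ∃ κ1 κ2, IsCoreOf k ℓ κ1 μ ∧ IsCoreOf k ℓ κ2 lam ∧ (∀ i, κ1 i ≤ κ2 i) ∧ κ1 ≠ κ2


/-!
For `μ ∈ P̃ℓk` the map `s ↦ s - μ_s` is monotone, so row `x` of `Δ^k(μ)` starts at column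
`k - μ_x + x + 1`, and when `μ_{x+1} ≤ μ_x` this leftmost root is the removable root of row `x`.
By (a) both conditions hold for `λ` in row `z`, and by (b) for `μ` in row `z + i`; the bottom
bound makes row `z + i` of `Δ^k(λ)` nonempty, so both columns are at most `ℓ`. Finally (a) and
(c) give `μ_{z+i} = λ_z`, so the two columns differ by exactly `i`.
-/

lemma mem_deltaPlus {ℓ a b : ℕ} : (a, b) ∈ DeltaPlus ℓ ↔ 1 ≤ a ∧ b ≤ ℓ ∧ a < b := by
  simp only [DeltaPlus, Finset.mem_filter, Finset.mem_product, Finset.mem_Icc]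
  omega

lemma mem_deltaK {k ℓ : ℕ} {μ : ℕ → ℤ} {a b : ℕ} :
    (a, b) ∈ DeltaK k ℓ μ ↔ 1 ≤ a ∧ b ≤ ℓ ∧ a < b ∧ (k : ℤ) - μ a + a < b := by
  simp only [DeltaK, Finset.mem_filter, mem_deltaPlus, and_assoc]

lemma IsRemovableAt.le_of_mem {ℓ : ℕ} {Ψ : Finset (ℕ × ℕ)} {x j j' : ℕ}
    (h : IsRemovableAt ℓ Ψ x j) (hΨ : Ψ ⊆ DeltaPlus ℓ) (hj' : (x, j') ∈ Ψ) : j ≤ j' := by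
  by_contra! hlt
  have hne : (x, j') ≠ (x, j) := by simp [hlt.ne]
  have hclosed := h.2.2 (x, j') (Finset.mem_erase.2 ⟨hne, hj'⟩) (x, j) (hΨ h.1) le_rfl hlt.le
  exact Finset.notMem_erase _ _ hclosed

lemma downF_eq_of_isRemovableAt {ℓ : ℕ} {Ψ : Finset (ℕ × ℕ)} {x j : ℕ}
    (h : IsRemovableAt ℓ Ψ x j) (hΨ : Ψ ⊆ DeltaPlus ℓ) : downF ℓ Ψ x = j := by
  classical
  have hj : j ∈ Finset.Icc 1 ℓ := by
    obtain ⟨hx, hjℓ, hxj⟩ := mem_deltaPlus.1 (hΨ h.1)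
    exact Finset.mem_Icc.2 ⟨by omega, hjℓ⟩
  refine le_antisymm (Finset.sup_le fun j' hj' => ?_) ?_
  · exact ((Finset.mem_filter.1 hj').2.le_of_mem hΨ h.1)
  · exact Finset.le_sup (f := id) (Finset.mem_filter.2 ⟨hj, h⟩)

section StepBounded

variable {k ℓ : ℕ} {μ : ℕ → ℤ} (hstep : ∀ s ∈ Finset.Icc 1 (ℓ - 1), μ (s + 1) ≤ μ s + 1)
include hstep

lemma monotoneOn_sub_of_step_le : MonotoneOn (fun s : ℕ => (s : ℤ) - μ s) (Set.Icc 1 ℓ) := by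
  refine monotoneOn_of_le_add_one Set.ordConnected_Icc fun s _ hs hs' => ?_
  have := hstep s (Finset.mem_Icc.2 ⟨hs.1, by simp at hs'; omega⟩)
  push_cast
  omega

lemma isRootIdeal_deltaK : IsRootIdeal ℓ (DeltaK k ℓ μ) := by
  refine ⟨Finset.filter_subset _ _, ?_⟩
  rintro ⟨a, b⟩ hp ⟨c, d⟩ hq (hca : c ≤ a) (hbd : b ≤ d)
  obtain ⟨ha, hbℓ, hab, hroot⟩ := mem_deltaK.1 hp
  obtain ⟨hc, hdℓ, hcd⟩ := mem_deltaPlus.1 hq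
  have := monotoneOn_sub_of_step_le hstep ⟨hc, by omega⟩ ⟨ha, by omega⟩ hca
  exact mem_deltaK.2 ⟨hc, hdℓ, hcd, by simp only at this; omega⟩

lemma mem_deltaK_of_le_bottomB {x : ℕ} (hx : 1 ≤ x) (hxb : x ≤ bottomB k ℓ μ) :
    (x, ℓ) ∈ DeltaK k ℓ μ := by
  obtain ⟨⟨a, b⟩, hp, hxa⟩ := (Finset.le_sup_iff (show ⊥ < x by simp; omega)).1 hxb
  obtain ⟨-, hbℓ, hab, -⟩ := mem_deltaK.1 hp
  exact (isRootIdeal_deltaK hstep).2 _ hp _ (mem_deltaPlus.2 ⟨hx, le_rfl, by simp at hxa; omega⟩)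
    hxa hbℓ

/-- `(x, j)` is the leftmost root of row `x`, and every root in a lower row lies strictly to its
right because `s ↦ s - μ_s` is monotone. -/
lemma isRemovableAt_deltaK {x j : ℕ} (hx : 1 ≤ x) (hj : (j : ℤ) = k - μ x + x + 1)
    (hxj : x < j) (hjℓ : j ≤ ℓ) (hdec : μ (x + 1) ≤ μ x) :
    IsRemovableAt ℓ (DeltaK k ℓ μ) x j := by
  refine ⟨mem_deltaK.2 ⟨hx, hjℓ, hxj, by omega⟩,
    (Finset.erase_subset _ _).trans (Finset.filter_subset _ _), ?_⟩
  rintro ⟨a, b⟩ hp q hq hqa hbq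
  obtain ⟨hne, hpK⟩ := Finset.mem_erase.1 hp
  refine Finset.mem_erase.2 ⟨?_, (isRootIdeal_deltaK hstep).2 _ hpK q hq hqa hbq⟩
  rintro rfl
  obtain ⟨ha, hbℓ, hab, hroot⟩ := mem_deltaK.1 hpK
  simp only at hqa hbq
  rcases hqa.eq_or_lt with rfl | hxa
  · exact hne (by rw [show b = j by omega])
  · have := monotoneOn_sub_of_step_le hstep ⟨by omega, by omega⟩ ⟨by omega, by omega⟩
      (show x + 1 ≤ a by omega)
    simp only at this
    push_cast at this
    omega

end StepBounded

theorem stmt2_general (k ℓ : ℕ) (lam mu : ℕ → ℤ)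
    (hlam : memPt k ℓ lam) (hmu : memPt k ℓ mu)
    (z : ℕ) (hz1 : 1 ≤ z)
    (i : ℕ) (hi1 : 1 ≤ i) (hi2 : z + i + 1 ≤ ℓ) (hi3 : z + i ≤ bottomB k ℓ lam)
    (ha1 : ∀ t, z ≤ t → t < z + i → lam t = lam (t + 1))
    (hb1 : mu (z + i - 1) + 1 = mu (z + i))
    (hb2 : mu (z + i + 1) ≤ mu (z + i))
    (hc : mu (z + i - 1) + 1 = lam (z + i - 1)) :
    IsRemovableAt ℓ (DeltaK k ℓ lam) z (downF ℓ (DeltaK k ℓ lam) z) ∧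
    IsRemovableAt ℓ (DeltaK k ℓ mu) (z + i) (downF ℓ (DeltaK k ℓ mu) (z + i)) ∧
    downF ℓ (DeltaK k ℓ lam) z + i = downF ℓ (DeltaK k ℓ mu) (z + i) := by
  have hconst : ∀ t, z ≤ t → t ≤ z + i → lam t = lam z := fun t hzt =>
    Nat.le_induction (fun _ => rfl)
      (fun t hzt ih ht => (ha1 t hzt (by omega)).symm.trans (ih (by omega))) t hzt
  have hmu_zi : mu (z + i) = lam z := by
    rw [← hb1, hc, hconst _ (by omega) (by omega)]
  have hlam_z : lam z ≤ k := hlam.1 z (Finset.mem_Icc.2 ⟨hz1, by omega⟩)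
  have hrow : (k : ℤ) - lam z + (z + i : ℕ) < ℓ := by
    have := (mem_deltaK.1 (mem_deltaK_of_le_bottomB hlam.2 (by omega) hi3)).2.2.2
    rwa [hconst _ (by omega) le_rfl] at this
  obtain ⟨j, hj⟩ := Int.eq_ofNat_of_zero_le (show 0 ≤ (k : ℤ) - lam z + z + 1 by omega)
  have hlam_rem : IsRemovableAt ℓ (DeltaK k ℓ lam) z j :=
    isRemovableAt_deltaK hlam.2 hz1 hj.symm (by omega) (by push_cast at hrow; omega)
      (ha1 z le_rfl (by omega)).ge
  have hmu_rem : IsRemovableAt ℓ (DeltaK k ℓ mu) (z + i) (j + i) :=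
    isRemovableAt_deltaK hmu.2 (by omega) (by push_cast; omega) (by omega)
      (by push_cast at hrow; omega) hb2
  rw [downF_eq_of_isRemovableAt hlam_rem (Finset.filter_subset _ _),
    downF_eq_of_isRemovableAt hmu_rem (Finset.filter_subset _ _)]
  exact ⟨hlam_rem, hmu_rem, rfl⟩

/-- Lemma 3.12: under hypotheses (a), (b), (c), both `down_{Δ^k(λ)}(z)` and
`down_{Δ^k(μ)}(z+i)` are defined and `down_{Δ^k(λ)}(z) + i = down_{Δ^k(μ)}(z+i)`. -/
theorem stmt2 (k ℓ : ℕ) (hℓ : 1 ≤ ℓ) (lam mu : ℕ → ℤ)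
    (hlam : memPt k ℓ lam) (hmu : memPt k ℓ mu)
    (z : ℕ) (hz1 : 1 ≤ z) (hz2 : z + 1 ≤ bottomB k ℓ lam)
    (i : ℕ) (hi1 : 1 ≤ i) (hi2 : z + i + 1 ≤ ℓ) (hi3 : z + i ≤ bottomB k ℓ lam)
    (ha1 : ∀ t, z ≤ t → t < z + i → lam t = lam (t + 1))
    (ha2 : lam (z + i + 1) ≤ lam (z + i))
    (hb1 : mu (z + i - 1) + 1 = mu (z + i))
    (hb2 : mu (z + i + 1) ≤ mu (z + i))
    (hc : mu (z + i - 1) + 1 = lam (z + i - 1)) :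
    IsRemovableAt ℓ (DeltaK k ℓ lam) z (downF ℓ (DeltaK k ℓ lam) z) ∧
    IsRemovableAt ℓ (DeltaK k ℓ mu) (z + i) (downF ℓ (DeltaK k ℓ mu) (z + i)) ∧
    downF ℓ (DeltaK k ℓ lam) z + i = downF ℓ (DeltaK k ℓ mu) (z + i) :=
  stmt2_general k ℓ lam mu hlam hmu z hz1 i hi1 hi2 hi3 ha1 hb1 hb2 hc

end KkSchur
end

section
/- Let λ ∈ Pℓk, z ∈ [ℓ] and i ∈ [0, ℓ−z]. If λ − ε_{[z, z+i]} ∈ Pℓk, then w_{λ − ε_{[z,z+i]}} < w_λ; equivalently, the (k+1)-core 𝔠(λ − ε_{[z,z+i]}) is strictly contained in the (k+1)-core 𝔠(λ). -/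
/-!
Common framework: root ideals, Katalan functions, (generalized) K-k-Schur functions,
lowering operators, bounce paths, the sets `Ω`, and (k+1)-cores.
Vectors `γ ∈ ℤ^ℓ` are modelled as functions `ℕ → ℤ`, with the relevant indices `1,…,ℓ`.
Symmetric-function identities are stated in `MvPolynomial (Fin N) ℚ` for every `N`.
-/

noncomputable section KkSchur

/-!
The `(k+1)`-core of a `k`-bounded partition `m` is built row by row from the bottom, as the
outer shape of its `k`-skew diagram: row `i` consists of an offset `o` followed by `m i` cells,
where `o` is the least offset that is at least the offset of row `i + 1` and makes the first of
these cells have hook length at most `k`. All cells after the offset then have hook length at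
most `k`, and minimality of the offsets forces the offset cells to have hook length at least
`k + 2`; so the shape is a `(k+1)`-core whose image under `𝔭` is `m`.

If `m ≤ m'` row by row, an offset admissible for `m'` is admissible for `m`, because the rows
of the core of `m` below are shorter. Hence the core of `m` lies inside the core of `m'`, strictly
in every row where `m < m'`. Since `λ - ε_{[z,z+i]} ≤ λ` with a strict inequality in row `z`, this
gives the theorem.
-/

open Finset

def legLength (ℓ : ℕ) (K : ℕ → ℕ) (i j : ℕ) : ℕ := #{r ∈ Ioc i ℓ | j ≤ K r}

/-- `K` holds the rows of the core below row `i`. The offset `o` of row `i` is admissible if the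
offset of row `i + 1` is at most `o` and the cell `(i, o + 1)` has hook length at most `k`. -/
def IsAdmissibleOffset (k ℓ : ℕ) (m K : ℕ → ℕ) (i o : ℕ) : Prop :=
  K (i + 1) ≤ o + m (i + 1) ∧ legLength ℓ K i (o + 1) + m i ≤ k

/-- Row lengths of the `(k+1)`-core `𝔠(m)`; rows outside `1, …, ℓ` are empty. -/
def kCore (k ℓ : ℕ) (m : ℕ → ℕ) (i : ℕ) : ℕ :=
  if 1 ≤ i ∧ i ≤ ℓ then
    sInf {o | IsAdmissibleOffset k ℓ m
      (fun j => if _ : i < j ∧ j ≤ ℓ then kCore k ℓ m j else 0) i o} + m i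
  else 0
termination_by ℓ + 1 - i

def coreOffset (k ℓ : ℕ) (m : ℕ → ℕ) (i : ℕ) : ℕ :=
  sInf {o | IsAdmissibleOffset k ℓ m (kCore k ℓ m) i o}

section

variable {k ℓ : ℕ} {m m' K K' : ℕ → ℕ} {i j j' o : ℕ}

lemma legLength_anti (h : j ≤ j') : legLength ℓ K i j' ≤ legLength ℓ K i j :=
  card_le_card <| monotone_filter_right _ fun _ _ hr => h.trans hr

lemma legLength_mono (h : ∀ r, i < r → r ≤ ℓ → K r ≤ K' r) :
    legLength ℓ K i j ≤ legLength ℓ K' i j :=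
  card_le_card <| monotone_filter_right _ fun r hr hjr =>
    hjr.trans (h r (mem_Ioc.1 hr).1 (mem_Ioc.1 hr).2)

lemma legLength_eq_succ_add_one (hj : j ≤ K (i + 1)) (hi : i < ℓ) :
    legLength ℓ K i j = legLength ℓ K (i + 1) j + 1 := by
  have hIoc : Ioc i ℓ = insert (i + 1) (Ioc (i + 1) ℓ) := by
    ext r; simp only [mem_Ioc, mem_insert]; omega
  rw [legLength, legLength, hIoc, filter_insert, if_pos hj, card_insert_of_notMem]
  simp

lemma hookLen_eq (hK : ∀ r, ℓ < r → K r = 0) (hj : 1 ≤ j) :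
    hookLen K i j = K i + 1 - j + legLength ℓ K i j := by
  rw [hookLen, legLength, ← Set.ncard_coe_finset]
  congr 2
  ext r
  simp only [Set.mem_ofPred_eq, coe_filter, mem_Ioc]
  refine ⟨fun h => ⟨⟨h.1, ?_⟩, h.2⟩, fun h => ⟨h.1.1, h.2⟩⟩
  by_contra hr
  have := hK r (by omega)
  omega

lemma hookLen_anti (hK : ∀ r, ℓ < r → K r = 0) (hj : 1 ≤ j) (hjj : j ≤ j') :
    hookLen K i j' ≤ hookLen K i j := by
  rw [hookLen_eq hK hj, hookLen_eq hK (hj.trans hjj)]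
  have := legLength_anti (ℓ := ℓ) (K := K) (i := i) hjj
  omega

lemma hookLen_succ_lt (hK : ∀ r, ℓ < r → K r = 0) (hj : 1 ≤ j) (hjK : j ≤ K (i + 1))
    (hKi : K (i + 1) ≤ K i) : hookLen K (i + 1) j < hookLen K i j := by
  have hi : i < ℓ := by
    by_contra hi
    have := hK (i + 1) (by omega)
    omega
  rw [hookLen_eq hK hj, hookLen_eq hK hj, legLength_eq_succ_add_one hjK hi]
  omega

lemma isAdmissibleOffset_congr (h : ∀ r, i < r → K r = K' r) :
    IsAdmissibleOffset k ℓ m K i o ↔ IsAdmissibleOffset k ℓ m K' i o := by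
  unfold IsAdmissibleOffset legLength
  rw [h (i + 1) i.lt_succ_self, filter_congr fun r hr => by rw [h r (mem_Ioc.1 hr).1]]

lemma exists_isAdmissibleOffset (hk : m i ≤ k) (K : ℕ → ℕ) :
    ∃ o, IsAdmissibleOffset k ℓ m K i o := by
  refine ⟨K (i + 1) + (Ioc i ℓ).sup K, by omega, ?_⟩
  have : legLength ℓ K i (K (i + 1) + (Ioc i ℓ).sup K + 1) = 0 := by
    refine card_eq_zero.2 (filter_eq_empty_iff.2 fun r hr => ?_)
    have := le_sup (f := K) hr
    omega
  omega

lemma kCore_eq_zero (h : ¬ (1 ≤ i ∧ i ≤ ℓ)) : kCore k ℓ m i = 0 := by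
  rw [kCore, if_neg h]

lemma kCore_vanish (r : ℕ) (hr : ℓ < r) : kCore k ℓ m r = 0 :=
  kCore_eq_zero (by omega)

lemma kCore_eq_coreOffset_add (h1 : 1 ≤ i) (h2 : i ≤ ℓ) :
    kCore k ℓ m i = coreOffset k ℓ m i + m i := by
  rw [kCore, if_pos ⟨h1, h2⟩, coreOffset]
  congr 3
  ext o
  refine isAdmissibleOffset_congr fun r hr => ?_
  split_ifs with hr'
  · rfl
  · exact (kCore_eq_zero (by omega)).symm

lemma isAdmissibleOffset_coreOffset (hk : m i ≤ k) :
    IsAdmissibleOffset k ℓ m (kCore k ℓ m) i (coreOffset k ℓ m i) :=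
  Nat.sInf_mem (exists_isAdmissibleOffset hk _)

lemma coreOffset_le (h : IsAdmissibleOffset k ℓ m (kCore k ℓ m) i o) :
    coreOffset k ℓ m i ≤ o :=
  Nat.sInf_le h

lemma not_isAdmissibleOffset_of_lt (h : o < coreOffset k ℓ m i) :
    ¬ IsAdmissibleOffset k ℓ m (kCore k ℓ m) i o :=
  Nat.notMem_of_lt_sInf h

lemma kCore_succ_le (hk : ∀ i, 1 ≤ i → i ≤ ℓ → m i ≤ k)
    (hanti : ∀ i, 1 ≤ i → i < ℓ → m (i + 1) ≤ m i) (h1 : 1 ≤ i) :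
    kCore k ℓ m (i + 1) ≤ kCore k ℓ m i := by
  by_cases hi : i < ℓ
  · have hadm := (isAdmissibleOffset_coreOffset (ℓ := ℓ) (hk i h1 hi.le)).1
    have := hanti i h1 hi
    rw [kCore_eq_coreOffset_add h1 hi.le]
    omega
  · rw [kCore_vanish (i + 1) (by omega)]
    exact Nat.zero_le _

lemma hookLen_kCore_le (hk : m i ≤ k) (h1 : 1 ≤ i) (h2 : i ≤ ℓ)
    (hj : coreOffset k ℓ m i < j) : hookLen (kCore k ℓ m) i j ≤ k := by
  have hadm := (isAdmissibleOffset_coreOffset (ℓ := ℓ) hk).2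
  have := legLength_anti (ℓ := ℓ) (K := kCore k ℓ m) (i := i) (show _ + 1 ≤ j from hj)
  rw [hookLen_eq kCore_vanish (by omega), kCore_eq_coreOffset_add h1 h2]
  omega

/-- By minimality of the offset `o` of row `i`, either the leg of the cell `(i, o)` is too long,
or row `i + 1` has the same offset and the hook of `(i + 1, o)` is shorter. -/
theorem le_hookLen_kCore (hk : ∀ i, 1 ≤ i → i ≤ ℓ → m i ≤ k)
    (hanti : ∀ i, 1 ≤ i → i < ℓ → m (i + 1) ≤ m i) (i j : ℕ) (h1 : 1 ≤ i) (h2 : i ≤ ℓ)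
    (hj : 1 ≤ j) (hjo : j ≤ coreOffset k ℓ m i) :
    k + 2 ≤ hookLen (kCore k ℓ m) i j := by
  set o := coreOffset k ℓ m i
  have hKi : kCore k ℓ m i = o + m i := kCore_eq_coreOffset_add h1 h2
  suffices k + 2 ≤ hookLen (kCore k ℓ m) i o from
    this.trans (hookLen_anti kCore_vanish hj hjo)
  have hadm := isAdmissibleOffset_coreOffset (ℓ := ℓ) (hk i h1 h2)
  have hmin := not_isAdmissibleOffset_of_lt (k := k) (ℓ := ℓ) (m := m) (i := i)
    (show o - 1 < o by omega)
  rw [IsAdmissibleOffset, not_and_or, not_le, not_le] at hmin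
  rcases hmin with hrow | hleg
  · have hi : i + 1 ≤ ℓ := by
      by_contra hi
      rw [kCore_vanish (i + 1) (by omega)] at hrow
      omega
    have hKs := kCore_eq_coreOffset_add (m := m) (k := k) (by omega) hi
    have hbelow := le_hookLen_kCore hk hanti (i + 1) o (by omega) hi (by omega)
      (by have := hadm.1; omega)
    have := hookLen_succ_lt kCore_vanish (i := i) (j := o) (by omega) (by omega)
      (kCore_succ_le hk hanti h1)
    omega
  · rw [show o - 1 + 1 = o by omega] at hleg
    rw [hookLen_eq kCore_vanish (by omega)]
    omega
termination_by ℓ + 1 - i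

lemma isCore_kCore (hk : ∀ i, 1 ≤ i → i ≤ ℓ → m i ≤ k)
    (hanti : ∀ i, 1 ≤ i → i < ℓ → m (i + 1) ≤ m i) : IsCore (k + 1) (kCore k ℓ m) := by
  refine ⟨⟨fun i h1 => kCore_succ_le hk hanti h1, ℓ, kCore_vanish⟩, fun i j h1 hj hjK => ?_⟩
  have h2 : i ≤ ℓ := by
    by_contra h2
    rw [kCore_vanish i (by omega)] at hjK
    omega
  rcases le_or_gt j (coreOffset k ℓ m i) with hjo | hjo
  · have := le_hookLen_kCore hk hanti i j h1 h2 hj hjo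
    omega
  · have := hookLen_kCore_le (hk i h1 h2) h1 h2 hjo
    omega

lemma pCore_kCore (hk : ∀ i, 1 ≤ i → i ≤ ℓ → m i ≤ k)
    (hanti : ∀ i, 1 ≤ i → i < ℓ → m (i + 1) ≤ m i) (h1 : 1 ≤ i) :
    pCore k (kCore k ℓ m) i = if i ≤ ℓ then m i else 0 := by
  split_ifs with h2
  · have hcells : {j | 1 ≤ j ∧ j ≤ kCore k ℓ m i ∧ hookLen (kCore k ℓ m) i j ≤ k} =
        ↑(Icc (coreOffset k ℓ m i + 1) (kCore k ℓ m i)) := by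
      ext j
      simp only [Set.mem_ofPred_eq, coe_Icc, Set.mem_Icc]
      refine ⟨fun ⟨hj, hjK, hhook⟩ => ⟨?_, hjK⟩,
        fun ⟨hjo, hjK⟩ => ⟨by omega, hjK, hookLen_kCore_le (hk i h1 h2) h1 h2 hjo⟩⟩
      by_contra hjo
      have := le_hookLen_kCore hk hanti i j h1 h2 hj (by omega)
      omega
    rw [pCore, hcells, Set.ncard_coe_finset, Nat.card_Icc, kCore_eq_coreOffset_add h1 h2]
    omega
  · rw [pCore, kCore_vanish i (by omega)]
    convert Set.ncard_empty ℕ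
    ext j
    simp only [Set.mem_ofPred_eq, Set.mem_empty_iff_false, iff_false]
    omega

theorem coreOffset_le_coreOffset (hk' : ∀ i, 1 ≤ i → i ≤ ℓ → m' i ≤ k)
    (hle : ∀ i, 1 ≤ i → i ≤ ℓ → m i ≤ m' i) (i : ℕ) (h1 : 1 ≤ i) (h2 : i ≤ ℓ) :
    coreOffset k ℓ m i ≤ coreOffset k ℓ m' i := by
  have hbelow : ∀ r, i < r → r ≤ ℓ →
      coreOffset k ℓ m r ≤ coreOffset k ℓ m' r ∧ kCore k ℓ m r ≤ kCore k ℓ m' r :=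
    fun r hr hrℓ => by
      have hoff := coreOffset_le_coreOffset hk' hle r (by omega) hrℓ
      have := hle r (by omega) hrℓ
      rw [kCore_eq_coreOffset_add (by omega) hrℓ, kCore_eq_coreOffset_add (by omega) hrℓ]
      exact ⟨hoff, by omega⟩
  have hadm' := isAdmissibleOffset_coreOffset (ℓ := ℓ) (hk' i h1 h2)
  refine coreOffset_le ⟨?_, ?_⟩
  · by_cases hi : i + 1 ≤ ℓ
    · have := (hbelow (i + 1) (by omega) hi).1
      have := hadm'.1
      rw [kCore_eq_coreOffset_add (by omega) hi] at this ⊢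
      omega
    · rw [kCore_vanish (i + 1) (by omega)]
      exact Nat.zero_le _
  · have := legLength_mono (i := i) (j := coreOffset k ℓ m' i + 1)
      fun r hr hrℓ => (hbelow r hr hrℓ).2
    have := hle i h1 h2
    have := hadm'.2
    omega
termination_by ℓ + 1 - i

lemma kCore_le_kCore (hk' : ∀ i, 1 ≤ i → i ≤ ℓ → m' i ≤ k)
    (hle : ∀ i, 1 ≤ i → i ≤ ℓ → m i ≤ m' i) (i : ℕ) : kCore k ℓ m i ≤ kCore k ℓ m' i := by
  by_cases hi : 1 ≤ i ∧ i ≤ ℓ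
  · have := coreOffset_le_coreOffset hk' hle i hi.1 hi.2
    have := hle i hi.1 hi.2
    rw [kCore_eq_coreOffset_add hi.1 hi.2, kCore_eq_coreOffset_add hi.1 hi.2]
    omega
  · rw [kCore_eq_zero hi]
    exact Nat.zero_le _

lemma kCore_lt_kCore (hk' : ∀ i, 1 ≤ i → i ≤ ℓ → m' i ≤ k)
    (hle : ∀ i, 1 ≤ i → i ≤ ℓ → m i ≤ m' i) (h1 : 1 ≤ i) (h2 : i ≤ ℓ)
    (hlt : m i < m' i) : kCore k ℓ m i < kCore k ℓ m' i := by
  have := coreOffset_le_coreOffset hk' hle i h1 h2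
  rw [kCore_eq_coreOffset_add h1 h2, kCore_eq_coreOffset_add h1 h2]
  omega

end

lemma toNat_le_of_memPk {k ℓ : ℕ} {lam : ℕ → ℤ} (h : memPk k ℓ lam) :
    ∀ i, 1 ≤ i → i ≤ ℓ → (lam i).toNat ≤ k := fun i h1 h2 => by
  have := h.1 i (mem_Icc.2 ⟨h1, h2⟩)
  omega

lemma isCoreOf_kCore_toNat {k ℓ : ℕ} {lam : ℕ → ℤ} (h : memPk k ℓ lam) :
    IsCoreOf k ℓ (kCore k ℓ fun i => (lam i).toNat) lam := by
  have hanti : ∀ i, 1 ≤ i → i < ℓ → (lam (i + 1)).toNat ≤ (lam i).toNat := fun i h1 h2 => by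
    have := h.2 i (mem_Icc.2 ⟨h1, by omega⟩)
    omega
  refine ⟨isCore_kCore (toNat_le_of_memPk h) hanti, fun i h1 => ?_⟩
  rw [pCore_kCore (toNat_le_of_memPk h) hanti h1]
  split_ifs with h2
  · exact Int.toNat_of_nonneg (h.1 i (mem_Icc.2 ⟨h1, h2⟩)).1
  · rfl

theorem stmt19_general (k ℓ : ℕ) (lam : ℕ → ℤ) (hlam : memPk k ℓ lam)
    (z i : ℕ) (hz1 : 1 ≤ z) (hz2 : z ≤ ℓ)
    (hsub : memPk k ℓ (fun t => lam t - epsI z (z + i) t)) :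
    coreLT k ℓ (fun t => lam t - epsI z (z + i) t) lam := by
  have hle : ∀ t, 1 ≤ t → t ≤ ℓ → (lam t - epsI z (z + i) t).toNat ≤ (lam t).toNat :=
    fun t _ _ => by unfold epsI; split_ifs <;> omega
  have hlt : (lam z - epsI z (z + i) z).toNat < (lam z).toNat := by
    have hμz := (hsub.1 z (mem_Icc.2 ⟨hz1, hz2⟩)).1
    have hε : epsI z (z + i) z = 1 := if_pos ⟨le_rfl, Nat.le_add_right z i⟩
    simp only [hε] at hμz ⊢
    omega
  have hk := toNat_le_of_memPk hlam
  refine ⟨_, _, isCoreOf_kCore_toNat hsub, isCoreOf_kCore_toNat hlam,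
    kCore_le_kCore hk hle, fun h => ?_⟩
  exact (kCore_lt_kCore hk hle hz1 hz2 hlt).ne (congrFun h z)

/-- Lemma 4.3: if `λ - ε_{[z,z+i]} ∈ Pℓk` then `w_{λ - ε_{[z,z+i]}} < w_λ`,
i.e. `𝔠(λ - ε_{[z,z+i]}) ⊊ 𝔠(λ)`. -/
theorem stmt19 (k ℓ : ℕ) (hℓ : 1 ≤ ℓ) (lam : ℕ → ℤ) (hlam : memPk k ℓ lam)
    (z i : ℕ) (hz1 : 1 ≤ z) (hz2 : z ≤ ℓ) (hi : z + i ≤ ℓ)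
    (hsub : memPk k ℓ (fun t => lam t - epsI z (z + i) t)) :
    coreLT k ℓ (fun t => lam t - epsI z (z + i) t) lam :=
  stmt19_general k ℓ lam hlam z i hz1 hz2 hsub

end KkSchur
end
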